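/- arXiv:2210.17329 — 2 statements merged into one kernel-verified Lean document; each statement's English description precedes it below -/
import Mathlib

section
/- For any finitely supported multi-index m and dimension d ≥ 1, Σ_{w ≤ m} C(m,w) · C(|w|+d−1, d−1) · |w|! · |m−w|! = (|m|+d)! / d!. -/
/-- Order (total degree) of a finitely supported multi-index. -/
def deg (m : ℕ →₀ ℕ) : ℕ := m.sum fun _ k => k

/-- Multivariate binomial coefficient `C(m, w) = Π_i C(m_i, w_i)`. -/
def mchoose (m w : ℕ →₀ ℕ) : ℕ := ∏ i ∈ m.support, (m i).choose (w i)

/-!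
The generating function `∑_{w ≤ m} C(m,w) x^|w|` factors over the coordinates of `m` into
`∏_i (1 + x)^{m_i} = (1 + x)^|m|`, so grouping the `w` by `|w| = k` turns any sum
`∑_{w ≤ m} C(m,w) f(|w|)` into `∑_k C(|m|,k) f(k)`. With `n = |m|` and `C(n,k) k! (n-k)! = n!`,
the left-hand side becomes `n! ∑_{k ≤ n} C(k+d-1, d-1) = n! C(n+d, d) = (n+d)!/d!` by the
hockey-stick identity.
-/

open Finset Nat

lemma deg_add (u v : ℕ →₀ ℕ) : deg (u + v) = deg u + deg v :=
  Finsupp.sum_add_index' (fun _ => rfl) (fun _ _ _ => rfl)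

lemma deg_single (a j : ℕ) : deg (Finsupp.single a j) = j :=
  Finsupp.sum_single_index rfl

lemma deg_tsub {m w : ℕ →₀ ℕ} (h : w ≤ m) : deg (m - w) = deg m - deg w := by
  rw [← tsub_add_cancel_of_le h, deg_add, add_tsub_cancel_right, Nat.add_sub_cancel]

lemma deg_mono : Monotone deg := fun w m h => by
  rw [← tsub_add_cancel_of_le h, deg_add]
  exact Nat.le_add_left _ _

section
variable {ι M : Type*} [DecidableEq ι] [AddCommMonoid M]

lemma Finsupp.sum_Iic_add_of_disjoint {m₁ m₂ : ι →₀ ℕ} (h : Disjoint m₁.support m₂.support)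
    (F : (ι →₀ ℕ) → M) :
    ∑ w ∈ Iic (m₁ + m₂), F w = ∑ u ∈ Iic m₁, ∑ v ∈ Iic m₂, F (u + v) := by
  have hzero : ∀ i, m₁ i = 0 ∨ m₂ i = 0 := fun i => by
    by_contra! h'
    exact disjoint_left.mp h (mem_support_iff.2 h'.1) (mem_support_iff.2 h'.2)
  have split : ∀ w ≤ m₁ + m₂, w ⊓ m₁ + w ⊓ m₂ = w := fun w hw => by
    ext i; have := hw i; have := hzero i
    simp only [Finsupp.add_apply, Finsupp.inf_apply] at *; omega
  have proj : ∀ u ≤ m₁, ∀ v ≤ m₂, (u + v) ⊓ m₁ = u ∧ (u + v) ⊓ m₂ = v := fun u hu v hv => by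
    refine ⟨Finsupp.ext fun i => ?_, Finsupp.ext fun i => ?_⟩ <;>
    · have := hu i; have := hv i; have := hzero i
      simp only [Finsupp.add_apply, Finsupp.inf_apply]; omega
  rw [← sum_product']
  refine sum_nbij' (fun w => (w ⊓ m₁, w ⊓ m₂)) (fun p => p.1 + p.2) (by simp) (fun p hp => ?_)
    (fun w hw => split w (mem_Iic.1 hw)) (fun p hp => ?_) (fun w hw => by rw [split w (mem_Iic.1 hw)])
  all_goals simp only [mem_product, mem_Iic] at hp
  · exact mem_Iic.2 (add_le_add hp.1 hp.2)
  · exact Prod.ext_iff.2 (proj _ hp.1 _ hp.2)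

lemma Finsupp.sum_Iic_single (a : ι) (b : ℕ) (F : (ι →₀ ℕ) → M) :
    ∑ w ∈ Iic (single a b), F w = ∑ j ∈ range (b + 1), F (single a j) := by
  have eq_single : ∀ w ∈ Iic (single a b), w = single a (w a) := fun w hw =>
    support_subset_singleton.1 ((support_mono (mem_Iic.1 hw)).trans support_single_subset)
  refine sum_nbij' (fun w => w a) (single a) (fun w hw => ?_) (fun j hj => ?_)
    (fun w hw => (eq_single w hw).symm) (fun j _ => single_eq_same)
    (fun w hw => congrArg F (eq_single w hw))
  · simpa [Nat.lt_succ_iff] using mem_Iic.1 hw a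
  · simpa [Nat.lt_succ_iff] using hj
end

lemma mchoose_single {a b : ℕ} (hb : b ≠ 0) (j : ℕ) :
    mchoose (Finsupp.single a b) (Finsupp.single a j) = b.choose j := by
  rw [mchoose, Finsupp.support_single a hb, prod_singleton, Finsupp.single_eq_same,
    Finsupp.single_eq_same]

lemma mchoose_add_add {m₁ m₂ u v : ℕ →₀ ℕ} (h : Disjoint m₁.support m₂.support)
    (hu : u ≤ m₁) (hv : v ≤ m₂) :
    mchoose (m₁ + m₂) (u + v) = mchoose m₁ u * mchoose m₂ v := by
  rw [mchoose, Finsupp.support_add_eq h, prod_union h]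
  congr 1 <;> refine prod_congr rfl fun i hi => ?_
  · have h2 : m₂ i = 0 := Finsupp.notMem_support_iff.mp (disjoint_left.mp h hi)
    have : v i = 0 := by have := hv i; omega
    simp [*]
  · have h1 : m₁ i = 0 := Finsupp.notMem_support_iff.mp (disjoint_right.mp h hi)
    have : u i = 0 := by have := hu i; omega
    simp [*]

theorem sum_Iic_mchoose_mul_pow {R : Type*} [CommSemiring R] (m : ℕ →₀ ℕ) (x : R) :
    ∑ w ∈ Iic m, mchoose m w * x ^ deg w = (1 + x) ^ deg m := by
  induction m using Finsupp.induction with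
  | zero => simp [show Iic (0 : ℕ →₀ ℕ) = {0} from Iic_bot, mchoose, deg]
  | single_add a b t ha hb ih =>
    have hdisj : Disjoint (Finsupp.single a b).support t.support := by
      simpa [Finsupp.support_single a hb] using ha
    rw [Finsupp.sum_Iic_add_of_disjoint hdisj, Finsupp.sum_Iic_single, deg_add, deg_single,
      pow_add, ← ih, add_comm 1 x, add_pow, sum_mul_sum]
    refine sum_congr rfl fun j hj => sum_congr rfl fun v hv => ?_
    rw [mchoose_add_add hdisj (Finsupp.single_le_iff.2 (by simpa [Nat.lt_succ_iff] using hj))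
      (mem_Iic.1 hv), mchoose_single hb, deg_add, deg_single]
    push_cast
    ring

open Polynomial in
lemma sum_filter_deg_mchoose_eq_choose (m : ℕ →₀ ℕ) (k : ℕ) :
    ∑ w ∈ Iic m with deg w = k, mchoose m w = (deg m).choose k := by
  have := congrArg (coeff · k) (sum_Iic_mchoose_mul_pow m (X : ℕ[X]))
  simpa [finsetSum_coeff, coeff_one_add_X_pow, coeff_X_pow, sum_filter, eq_comm] using this

theorem sum_Iic_mchoose_smul {M : Type*} [AddCommMonoid M] (m : ℕ →₀ ℕ) (f : ℕ → M) :
    ∑ w ∈ Iic m, mchoose m w • f (deg w) = ∑ k ∈ range (deg m + 1), (deg m).choose k • f k := by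
  rw [← sum_fiberwise_of_maps_to (g := deg) (t := range (deg m + 1))
    fun w hw => mem_range_succ_iff.2 (deg_mono (mem_Iic.1 hw))]
  refine sum_congr rfl fun k _ => ?_
  rw [← sum_filter_deg_mchoose_eq_choose, sum_smul]
  exact sum_congr rfl fun w hw => by rw [(mem_filter.1 hw).2]

lemma sum_range_choose_mul_add_choose_mul_factorial (n e : ℕ) :
    ∑ k ∈ range (n + 1), n.choose k * ((k + e).choose e * k ! * (n - k)!)
      = (n + (e + 1))! / (e + 1)! := by
  have hterm : ∀ k ∈ range (n + 1),
      n.choose k * ((k + e).choose e * k ! * (n - k)!) = (k + e).choose e * n ! := fun k hk => by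
    rw [← choose_mul_factorial_mul_factorial (mem_range_succ_iff.1 hk)]
    ring
  rw [sum_congr rfl hterm, ← sum_mul, sum_range_add_choose]
  refine (Nat.div_eq_of_eq_mul_left (factorial_pos _) ?_).symm
  rw [← add_choose_mul_factorial_mul_factorial, ← add_assoc]

theorem stmt_11 (m : ℕ →₀ ℕ) (d : ℕ) (hd : 1 ≤ d) :
    ∑ w ∈ Finset.Iic m,
        mchoose m w * Nat.choose (deg w + d - 1) (d - 1) *
          Nat.factorial (deg w) * Nat.factorial (deg (m - w))
      = Nat.factorial (deg m + d) / Nat.factorial d := by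
  obtain ⟨e, rfl⟩ : ∃ e, d = e + 1 := ⟨d - 1, by omega⟩
  calc _ = ∑ w ∈ Iic m, mchoose m w • ((deg w + e).choose e * (deg w)! * (deg m - deg w)!) :=
        sum_congr rfl fun w hw => by
          rw [deg_tsub (mem_Iic.1 hw), smul_eq_mul, ← add_assoc, Nat.add_sub_cancel,
            Nat.add_sub_cancel]
          ring
    _ = _ := (sum_Iic_mchoose_smul m fun k => (k + e).choose e * k ! * (deg m - k)!).trans
        (sum_range_choose_mul_add_choose_mul_factorial _ _)
end

section
/- Define P_0 = 1 (for the zero multi-index) and, for finitely supported multi-indices m ≠ 0, P_m = (|m|+d)!/(m!·d!) + Σ_{w ≤ m, w ≠ m} P_w · (|m|−|w|+1)!, where m! = Π_i m_i!. Then P_m ≤ 2·τ_{|m|}·(|m|+d−1)!/(d−1)! for all m ≠ 0, where τ_0 = 1, τ_k = Σ_{j=0}^{k−1}(k−j+1)τ_j. -/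
def mfact (m : ℕ →₀ ℕ) : ℕ := ∏ i ∈ m.support, (m i).factorial

/-!
Induction on `m` along `<`. Grouping the `w < m` by `j = |w|` (there are at most `C(|m|, j)` of
them, as sub-multisets of size `j` of the multiset of `m`) and bounding `P_w` inductively, the
recursion for `P_m` is dominated term by term by the recursion for `τ_{|m|}`, because
`C(k, j) (j + d - 1)! (k - j + 1)! ≤ (k - j + 1) (k + d - 1)!`. In the `j = 0` term the exact
value `P_0 = 1` uses only half of the bound's share `2 (k + 1) (k + d - 1)! / (d - 1)!`; the other
half absorbs `(k + d)! / (m! d!)`.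
-/

open Finset
open scoped Nat

lemma deg_eq_zero_iff {m : ℕ →₀ ℕ} : deg m = 0 ↔ m = 0 :=
  Finsupp.degree_eq_zero_iff m

lemma deg_eq_card_toMultiset (m : ℕ →₀ ℕ) : deg m = Multiset.card (Finsupp.toMultiset m) :=
  (Finsupp.card_toMultiset m).symm

lemma deg_lt_deg {w m : ℕ →₀ ℕ} (h : w < m) : deg w < deg m :=
  Finsupp.sum_id_lt_of_lt w m h

lemma card_filter_deg_eq_le (m : ℕ →₀ ℕ) (j : ℕ) :
    #{w ∈ Iic m | deg w = j} ≤ (deg m).choose j := by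
  classical
  calc #{w ∈ Iic m | deg w = j}
      ≤ #(Multiset.powersetCard j (Finsupp.toMultiset m)).toFinset := by
        refine card_le_card_of_injOn Finsupp.toMultiset (fun w hw => ?_)
          (Function.LeftInverse.injective Finsupp.toMultiset_toFinsupp).injOn
        simp only [coe_filter, mem_Iic, Set.mem_ofPred_eq] at hw
        simp only [mem_coe, Multiset.mem_toFinset, Multiset.mem_powersetCard]
        exact ⟨Finsupp.toMultiset_strictMono.monotone hw.1,
          by rw [← deg_eq_card_toMultiset, hw.2]⟩
    _ ≤ Multiset.card (Multiset.powersetCard j (Finsupp.toMultiset m)) :=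
        Multiset.toFinset_card_le _
    _ = (deg m).choose j := by rw [Multiset.card_powersetCard, deg_eq_card_toMultiset]

lemma sum_Iio_le_sum_range_choose_mul {R : Type*} [Semiring R] [PartialOrder R] [IsOrderedRing R]
    (m : ℕ →₀ ℕ) {f : ℕ → R} (hf : ∀ j, 0 ≤ f j) :
    ∑ w ∈ Iio m, f (deg w) ≤ ∑ j ∈ range (deg m), (deg m).choose j * f j := by
  rw [← sum_fiberwise_of_maps_to (g := deg) (t := range (deg m))
    fun w hw => mem_range.2 (deg_lt_deg (mem_Iio.1 hw))]
  refine sum_le_sum fun j _ => ?_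
  have hcard : #{w ∈ Iio m | deg w = j} ≤ (deg m).choose j :=
    (card_le_card (filter_subset_filter _ Iio_subset_Iic_self)).trans (card_filter_deg_eq_le m j)
  calc ∑ w ∈ Iio m with deg w = j, f (deg w) = #{w ∈ Iio m | deg w = j} * f j := by
        rw [sum_congr rfl fun w hw => by rw [(mem_filter.1 hw).2], sum_const, nsmul_eq_mul]
    _ ≤ (deg m).choose j * f j := mul_le_mul_of_nonneg_right (Nat.mono_cast hcard) (hf j)

theorem Nat.choose_mul_add_factorial_mul_succ_factorial_le (e : ℕ) {j k : ℕ} (h : j ≤ k) :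
    k.choose j * (j + e)! * (k - j + 1)! ≤ (k - j + 1) * (k + e)! := by
  have hchoose : k.choose j ≤ (k + e).choose (k - j) := by
    rw [← Nat.choose_symm h]
    exact Nat.choose_le_choose _ (Nat.le_add_right k e)
  have hfact := Nat.choose_mul_factorial_mul_factorial (show k - j ≤ k + e by omega)
  rw [show k + e - (k - j) = j + e by omega] at hfact
  calc k.choose j * (j + e)! * (k - j + 1)!
      = (k - j + 1) * (k.choose j * (k - j)! * (j + e)!) := by rw [Nat.factorial_succ]; ring
    _ ≤ (k - j + 1) * ((k + e).choose (k - j) * (k - j)! * (j + e)!) := by gcongr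
    _ = (k - j + 1) * (k + e)! := by rw [hfact]

theorem choose_mul_factorial_div_mul_factorial_le (e : ℕ) {j k : ℕ} (h : j ≤ k) :
    k.choose j * ((j + e)! / e ! : ℝ) * (k - j + 1)! ≤ (k - j + 1 : ℕ) * ((k + e)! / e ! : ℝ) := by
  have := Nat.choose_mul_add_factorial_mul_succ_factorial_le e h
  rw [mul_div_assoc', mul_div_assoc', div_mul_eq_mul_div,
    div_le_div_iff_of_pos_right (by positivity)]
  exact_mod_cast this

theorem factorial_succ_add_div_le (k e : ℕ) :
    ((k + e + 1)! / (e + 1)! : ℝ) ≤ (k + 1 : ℕ) * ((k + e)! / e ! : ℝ) := by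
  rw [mul_div_assoc', div_le_div_iff₀ (by positivity) (by positivity), Nat.factorial_succ (k + e),
    Nat.factorial_succ e]
  push_cast
  have : (k + e + 1 : ℝ) ≤ (k + 1) * (e + 1) := by nlinarith
  calc ((k + e + 1) * (k + e)! * e ! : ℝ) ≤ ((k + 1) * (e + 1)) * (k + e)! * e ! := by gcongr
    _ = _ := by ring

-- The bound for order `k` when `d = e + 1`; at order 0 it is the exact value `P 0 = 1`, since the
-- closed form `2` would leave no room for the leading term of the recursion.
noncomputable def momentBound (τ : ℕ → ℕ) (e : ℕ) : ℕ → ℝ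
  | 0 => 1
  | k + 1 => 2 * τ (k + 1) * ((k + 1 + e)! / e !)

lemma momentBound_nonneg (τ : ℕ → ℕ) (e : ℕ) : ∀ k, 0 ≤ momentBound τ e k
  | 0 => zero_le_one
  | _ + 1 => by unfold momentBound; positivity

section Recursion

variable {τ : ℕ → ℕ} (hτ0 : τ 0 = 1)
  (hτrec : ∀ k : ℕ, 1 ≤ k → τ k = ∑ j ∈ range k, (k - j + 1) * τ j)
include hτ0 hτrec

theorem factorial_div_add_sum_choose_mul_momentBound_le (e : ℕ) {k : ℕ} (hk : k ≠ 0) :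
    ((k + e + 1)! / (e + 1)! : ℝ) +
        ∑ j ∈ range k, k.choose j * (momentBound τ e j * (k - j + 1)!)
      ≤ momentBound τ e k := by
  obtain ⟨n, rfl⟩ : ∃ n, k = n + 1 := ⟨k - 1, by omega⟩
  set F : ℝ := ((n + 1 + e)! / e ! : ℝ)
  have hterm : ∀ i ∈ range n,
      ((n + 1).choose (i + 1) * (momentBound τ e (i + 1) * (n + 1 - (i + 1) + 1)!) : ℝ)
        ≤ 2 * (n + 1 - (i + 1) + 1 : ℕ) * τ (i + 1) * F := by
    intro i hi
    have := choose_mul_factorial_div_mul_factorial_le e (j := i + 1) (k := n + 1)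
      (by have := mem_range.1 hi; omega)
    unfold momentBound
    calc _ = 2 * τ (i + 1) * ((n + 1).choose (i + 1) * ((i + 1 + e)! / e ! : ℝ) *
          (n + 1 - (i + 1) + 1)!) := by ring
      _ ≤ 2 * τ (i + 1) * ((n + 1 - (i + 1) + 1 : ℕ) * F) := by gcongr
      _ = _ := by ring
  have hlead : ((n + 1 + e + 1)! / (e + 1)! : ℝ) + (n + 1 + 1)!
      ≤ 2 * (n + 1 + 1 : ℕ) * τ 0 * F := by
    have h1 := factorial_succ_add_div_le (n + 1) e
    have h2 := choose_mul_factorial_div_mul_factorial_le e (Nat.zero_le (n + 1))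
    simp only [Nat.choose_zero_right, Nat.cast_one, one_mul, zero_add, Nat.sub_zero,
      div_self (show (e ! : ℝ) ≠ 0 by positivity)] at h2
    rw [hτ0]
    push_cast at h1 h2 ⊢
    linarith
  calc _ ≤ ((n + 1 + e + 1)! / (e + 1)! : ℝ) + (n + 1 + 1)! +
        ∑ i ∈ range n, 2 * (n + 1 - (i + 1) + 1 : ℕ) * τ (i + 1) * F := by
        rw [sum_range_succ', show momentBound τ e 0 = 1 from rfl]
        simp only [Nat.choose_zero_right, Nat.sub_zero, Nat.cast_one, one_mul]
        linarith [sum_le_sum hterm]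
    _ ≤ ∑ j ∈ range (n + 1), 2 * (n + 1 - j + 1 : ℕ) * τ j * F := by
        rw [sum_range_succ' _ n, Nat.sub_zero]
        linarith
    _ = momentBound τ e (n + 1) := by
        rw [momentBound, hτrec (n + 1) (Nat.le_add_left 1 n)]
        push_cast
        rw [mul_sum, sum_mul]
        exact sum_congr rfl fun j _ => by ring

theorem le_momentBound_deg (e : ℕ) {P : (ℕ →₀ ℕ) → ℝ} (hP0 : P 0 = 1)
    (hPrec : ∀ m : ℕ →₀ ℕ, m ≠ 0 →
      P m = ((deg m + (e + 1))! : ℝ) / (mfact m * (e + 1)!) +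
        ∑ w ∈ (Iic m).erase m, P w * (deg m - deg w + 1)!)
    (m : ℕ →₀ ℕ) : P m ≤ momentBound τ e (deg m) := by
  induction m using WellFoundedLT.induction with
  | _ m ih =>
  rcases eq_or_ne m 0 with rfl | hm
  · rw [hP0, deg_eq_zero_iff.2 rfl]
    rfl
  have hdeg : deg m ≠ 0 := deg_eq_zero_iff.not.2 hm
  have hmfact : (1 : ℝ) ≤ mfact m := Nat.one_le_cast.2 (prod_pos fun i _ => (m i).factorial_pos)
  rw [hPrec m hm, Iic_erase]
  calc _ ≤ ((deg m + e + 1)! / (e + 1)! : ℝ) + ∑ j ∈ range (deg m),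
        (deg m).choose j * (momentBound τ e j * (deg m - j + 1)!) := by
        gcongr ?_ + ?_
        · rw [← add_assoc]
          exact div_le_div_of_nonneg_left (by positivity) (by positivity)
            (le_mul_of_one_le_left (by positivity) hmfact)
        · refine (sum_le_sum fun w hw => mul_le_mul_of_nonneg_right (ih w (mem_Iio.1 hw))
            (by positivity)).trans ?_
          exact sum_Iio_le_sum_range_choose_mul m
            (f := fun j => momentBound τ e j * ((deg m - j + 1)! : ℝ))
            fun j => mul_nonneg (momentBound_nonneg τ e j) (Nat.cast_nonneg _)
    _ ≤ momentBound τ e (deg m) :=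
        factorial_div_add_sum_choose_mul_momentBound_le hτ0 hτrec e hdeg

end Recursion

theorem stmt_14 (d : ℕ) (hd : 1 ≤ d)
    (τ : ℕ → ℕ) (hτ0 : τ 0 = 1)
    (hτrec : ∀ k : ℕ, 1 ≤ k → τ k = ∑ j ∈ Finset.range k, (k - j + 1) * τ j)
    (P : (ℕ →₀ ℕ) → ℝ) (hP0 : P 0 = 1)
    (hPrec : ∀ m : ℕ →₀ ℕ, m ≠ 0 →
      P m = (Nat.factorial (deg m + d) : ℝ) / (mfact m * Nat.factorial d) +
        ∑ w ∈ (Finset.Iic m).erase m,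
          P w * Nat.factorial (deg m - deg w + 1)) :
    ∀ m : ℕ →₀ ℕ, m ≠ 0 →
      P m ≤ 2 * τ (deg m) * Nat.factorial (deg m + d - 1) /
        Nat.factorial (d - 1) := by
  obtain ⟨e, rfl⟩ : ∃ e, d = e + 1 := ⟨d - 1, by omega⟩
  intro m hm
  obtain ⟨n, hn⟩ := Nat.exists_eq_succ_of_ne_zero (deg_eq_zero_iff.not.2 hm)
  have := le_momentBound_deg hτ0 hτrec e hP0 hPrec m
  rw [hn] at this ⊢
  simpa [momentBound, mul_div_assoc] using this
end
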